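/- (Serfling's bound.) Let Y₁,…,Y_T ∈ {0,1} with T = N + K, and let Π be a uniformly random subset of {1,…,T} of size K (sampling without replacement). Then for any 0 < ν < 1, Pr[ Σ_{j∉Π} Y_j ≥ (N/K) Σ_{j∈Π} Y_j + Nν ] ≤ exp( -2ν²NK² / ((N+K)(K+1)) ). -/

import Mathlib

/-!
Serfling's reverse-martingale argument. Deleting a uniformly random element `j` from a uniformly
random `(k + 1)`-subset `t` gives a uniformly random `k`-subset, and Hoeffding's lemma applied to
the deleted value `Y j` bounds `E exp (c ∑_{t \ j} Y)` by
`exp (c² / 8) E exp (c k / (k + 1) ∑_t Y)`. Iterating from `k = K` up to `k = T`, where the sum is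
the deterministic total `m`, bounds the moment generating function of a `K`-sample sum by
`exp (c² K² (∑_{K ≤ j < T} 1 / j²) / 8 + c K m / T)`. The series is at most
`(K + 1)(T - K) / (K² T)`, and Chernoff's bound with the optimal `c` gives the claim.
-/

open Real Finset MeasureTheory ProbabilityTheory

lemma Finset.sum_exp_mul_le_of_mem_Icc {ι : Type*} [Fintype ι] {s : Finset ι} (hs : s.Nonempty)
    {Y : ι → ℝ} (hY : ∀ j ∈ s, Y j ∈ Set.Icc 0 1) (t : ℝ) :
    ∑ j ∈ s, exp (t * Y j) ≤ #s * exp (t * (∑ j ∈ s, Y j) / #s + t ^ 2 / 8) := by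
  let _ : MeasurableSpace ι := ⊤
  set μ := (PMF.uniformOfFinset s hs).toMeasure
  have integral_eq (f : ι → ℝ) : ∫ j, f j ∂μ = (∑ j ∈ s, f j) / #s := by
    rw [PMF.integral_eq_sum, sum_div]
    simp [PMF.uniformOfFinset_apply, apply_ite, div_eq_inv_mul]
  have hY_ae : ∀ᵐ j ∂μ, Y j ∈ Set.Icc 0 1 := by
    rw [ae_iff, PMF.toMeasure_apply_eq_zero_iff _ MeasurableSpace.measurableSet_top,
      PMF.support_uniformOfFinset]
    exact Set.disjoint_left.2 fun j hj hj' => hj' (hY j hj)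
  have hoeffding : (∑ j ∈ s, exp (t * Y j)) / exp (t * ((∑ j ∈ s, Y j) / #s)) / #s ≤
      exp (1 / 4 * t ^ 2 / 2) := by
    have := (hasSubgaussianMGF_of_mem_Icc (measurable_of_countable Y).aemeasurable
      hY_ae).mgf_le t
    simp only [mgf, integral_eq, mul_sub, exp_sub, ← sum_div] at this
    norm_num at this
    exact this
  rw [div_div, div_le_iff₀ (by positivity)] at hoeffding
  exact hoeffding.trans_eq (by rw [exp_add]; ring_nf)

lemma Finset.sum_exp_mul_sum_erase_le {ι : Type*} [Fintype ι] [DecidableEq ι] {s : Finset ι}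
    (hs : s.Nonempty) {Y : ι → ℝ} (hY : ∀ j ∈ s, Y j ∈ Set.Icc 0 1) (c : ℝ) :
    ∑ j ∈ s, exp (c * ∑ i ∈ s.erase j, Y i) ≤
      #s * exp (c * (#s - 1) / #s * ∑ i ∈ s, Y i + c ^ 2 / 8) := by
  have hcard : (#s : ℝ) ≠ 0 := by exact_mod_cast hs.card_pos.ne'
  calc ∑ j ∈ s, exp (c * ∑ i ∈ s.erase j, Y i)
      = exp (c * ∑ i ∈ s, Y i) * ∑ j ∈ s, exp (-c * Y j) := by
        rw [mul_sum]
        refine sum_congr rfl fun j hj => ?_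
        rw [sum_erase_eq_sub hj, ← exp_add]
        ring_nf
    _ ≤ exp (c * ∑ i ∈ s, Y i) * (#s * exp (-c * (∑ j ∈ s, Y j) / #s + (-c) ^ 2 / 8)) := by
        gcongr
        exact sum_exp_mul_le_of_mem_Icc hs hY (-c)
    _ = #s * exp (c * (#s - 1) / #s * ∑ i ∈ s, Y i + c ^ 2 / 8) := by
        rw [mul_left_comm, ← exp_add]
        congr 2
        field_simp
        ring

lemma Finset.sum_powersetCard_succ_sum_erase {ι β : Type*} [DecidableEq ι] [AddCommMonoid β]
    (u : Finset ι) (k : ℕ) (f : Finset ι → β) :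
    ∑ t ∈ powersetCard (k + 1) u, ∑ j ∈ t, f (t.erase j) =
      (#u - k) • ∑ s ∈ powersetCard k u, f s := by
  have hcard : ∀ s ∈ powersetCard k u, (#u - k) • f s = ∑ _j ∈ u \ s, f s := by
    intro s hs
    rw [mem_powersetCard] at hs
    rw [sum_const, card_sdiff_of_subset hs.1, hs.2]
  rw [smul_sum, sum_congr rfl hcard, sum_sigma', sum_sigma']
  refine sum_nbij' (fun x => ⟨x.1.erase x.2, x.2⟩) (fun x => ⟨insert x.2 x.1, x.2⟩)
    ?_ ?_ ?_ ?_ (fun _ _ => rfl)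
  · rintro ⟨t, j⟩ h
    simp only [mem_sigma, mem_powersetCard] at h ⊢
    refine ⟨⟨(erase_subset _ _).trans h.1.1, ?_⟩,
      mem_sdiff.2 ⟨h.1.1 h.2, notMem_erase _ _⟩⟩
    rw [card_erase_of_mem h.2, h.1.2, Nat.add_sub_cancel]
  · rintro ⟨s, j⟩ h
    simp only [mem_sigma, mem_powersetCard, mem_sdiff] at h ⊢
    exact ⟨⟨insert_subset h.2.1 h.1.1, by rw [card_insert_of_notMem h.2.2, h.1.2]⟩,
      mem_insert_self _ _⟩
  · rintro ⟨t, j⟩ h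
    simp only [mem_sigma] at h
    simp [insert_erase h.2]
  · rintro ⟨s, j⟩ h
    simp only [mem_sigma, mem_sdiff] at h
    simp [erase_insert h.2.2]

lemma sum_Ico_inv_sq_le {K T : ℕ} (hK : 0 < K) (hKT : K ≤ T) :
    ∑ j ∈ Ico K T, ((j : ℝ) ^ 2)⁻¹ ≤ (K + 1) / K * (1 / K - 1 / T) := by
  have hK' : (0 : ℝ) < K := by exact_mod_cast hK
  induction T, hKT using Nat.le_induction with
  | base => simp
  | succ T hKT ih =>
    have hKT' : (K : ℝ) ≤ T := by exact_mod_cast hKT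
    have hT : (0 : ℝ) < T := hK'.trans_le hKT'
    -- the right-hand side grows by `(K + 1) / (K T (T + 1)) ≥ 1 / T²`
    have hstep : ((T : ℝ) ^ 2)⁻¹ ≤ (K + 1) / K * (1 / T - 1 / (T + 1)) := by
      rw [show (K + 1) / K * (1 / T - 1 / (T + 1)) = ((K : ℝ) + 1) / (K * (T * (T + 1))) by
        field_simp; ring, ← one_div, div_le_div_iff₀ (by positivity) (by positivity)]
      nlinarith
    rw [sum_Ico_succ_top hKT]
    exact (add_le_add ih hstep).trans_eq (by push_cast; ring)

lemma card_filter_le_le_exp_mul_sum_exp {α : Type*} (s : Finset α) (g : α → ℝ) {θ h : ℝ}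
    (hh : 0 ≤ h) :
    (#(s.filter fun x => g x ≤ θ) : ℝ) ≤ exp (h * θ) * ∑ x ∈ s, exp (-h * g x) := by
  rw [mul_sum, card_eq_sum_ones, Nat.cast_sum, Nat.cast_one, sum_filter]
  refine sum_le_sum fun x _ => ?_
  split_ifs with hx
  · rw [← exp_add]
    exact one_le_exp (by nlinarith)
  · positivity

/-- `(card ι choose k)` times the moment generating function of the sum of `Y` over a uniformly random
`k`-subset. -/
noncomputable def sampleMGF {ι : Type*} [Fintype ι] (Y : ι → ℝ) (k : ℕ) (c : ℝ) : ℝ :=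
  ∑ S ∈ powersetCard k (univ : Finset ι), exp (c * ∑ i ∈ S, Y i)

section sampleMGF

variable {ι : Type*} [Fintype ι] {Y : ι → ℝ}

lemma card_sub_mul_sampleMGF_le (hY : ∀ j, Y j ∈ Set.Icc 0 1) (k : ℕ) (c : ℝ) :
    ((Fintype.card ι - k : ℕ) : ℝ) * sampleMGF Y k c ≤
      (k + 1) * exp (c ^ 2 / 8) * sampleMGF Y (k + 1) (c * k / (k + 1)) := by
  classical
  have hcount := sum_powersetCard_succ_sum_erase univ k fun S => exp (c * ∑ i ∈ S, Y i)
  rw [card_univ, nsmul_eq_mul] at hcount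
  rw [sampleMGF, sampleMGF, ← hcount, mul_sum]
  refine sum_le_sum fun t ht => ?_
  rw [mem_powersetCard] at ht
  calc ∑ j ∈ t, exp (c * ∑ i ∈ t.erase j, Y i)
      ≤ #t * exp (c * (#t - 1) / #t * ∑ i ∈ t, Y i + c ^ 2 / 8) :=
        sum_exp_mul_sum_erase_le (card_pos.1 (by omega)) (fun j _ => hY j) c
    _ = _ := by
        rw [ht.2, exp_add]
        push_cast
        ring_nf

lemma sampleMGF_le (hY : ∀ j, Y j ∈ Set.Icc 0 1) {k : ℕ} (hk : 0 < k)
    (hkT : k ≤ Fintype.card ι) (c : ℝ) :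
    sampleMGF Y k c ≤ (Fintype.card ι).choose k *
      exp (c ^ 2 * k ^ 2 * (∑ j ∈ Ico k (Fintype.card ι), ((j : ℝ) ^ 2)⁻¹) / 8 +
        c * k * (∑ i, Y i) / Fintype.card ι) := by
  induction hkT using Nat.decreasingInduction generalizing c with
  | self =>
    have hT : (Fintype.card ι : ℝ) ≠ 0 := by exact_mod_cast hk.ne'
    rw [sampleMGF, show powersetCard (Fintype.card ι) univ = {univ} from powersetCard_self univ,
      sum_singleton, Nat.choose_self, Ico_self, sum_empty, Nat.cast_one, one_mul, mul_zero,
      zero_div, zero_add, mul_right_comm, mul_div_cancel_right₀ _ hT]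
  | of_succ k hkT ih =>
    have hTk : (0 : ℝ) < (Fintype.card ι - k : ℕ) := by exact_mod_cast Nat.sub_pos_of_lt hkT
    have hk' : (k : ℝ) ≠ 0 := by exact_mod_cast hk.ne'
    have hchoose : ((k : ℝ) + 1) * (Fintype.card ι).choose (k + 1) =
        (Fintype.card ι - k : ℕ) * (Fintype.card ι).choose k := by
      exact_mod_cast (by rw [mul_comm, Nat.choose_succ_right_eq, mul_comm] :
        (k + 1) * (Fintype.card ι).choose (k + 1) =
          (Fintype.card ι - k) * (Fintype.card ι).choose k)
    refine le_of_mul_le_mul_left ((card_sub_mul_sampleMGF_le hY k c).trans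
      ((mul_le_mul_of_nonneg_left (ih k.succ_pos _) (by positivity)).trans_eq ?_)) hTk
    rw [mul_mul_mul_comm, hchoose, mul_assoc, ← exp_add, sum_eq_sum_Ico_succ_bot hkT]
    congr 3
    push_cast
    field_simp
    ring

theorem card_filter_sum_le_mean_sub_le (hY : ∀ j, Y j ∈ Set.Icc 0 1) {K : ℕ} (hK : 0 < K)
    (hKT : K < Fintype.card ι) {x : ℝ} (hx : 0 ≤ x) :
    (#((powersetCard K (univ : Finset ι)).filter
        fun S => ∑ i ∈ S, Y i ≤ K * (∑ i, Y i) / Fintype.card ι - x) : ℝ) ≤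
      (Fintype.card ι).choose K *
        exp (-(2 * x ^ 2 * Fintype.card ι) / ((K + 1) * (Fintype.card ι - K))) := by
  have hK' : (0 : ℝ) < K := by exact_mod_cast hK
  have hKT' : (K : ℝ) < Fintype.card ι := by exact_mod_cast hKT
  have hT : (0 : ℝ) < Fintype.card ι := hK'.trans hKT'
  have hTK : (0 : ℝ) < Fintype.card ι - K := sub_pos.2 hKT'
  set h := 4 * x * Fintype.card ι / ((K + 1) * (Fintype.card ι - K)) with h_def
  have hh : 0 ≤ h := by positivity
  calc _ ≤ exp (h * (K * (∑ i, Y i) / Fintype.card ι - x)) * sampleMGF Y K (-h) :=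
        card_filter_le_le_exp_mul_sum_exp _ _ hh
    _ ≤ exp (h * (K * (∑ i, Y i) / Fintype.card ι - x)) * ((Fintype.card ι).choose K *
          exp ((-h) ^ 2 * K ^ 2 * ((K + 1) / K * (1 / K - 1 / Fintype.card ι)) / 8 +
            -h * K * (∑ i, Y i) / Fintype.card ι)) := by
        gcongr
        refine (sampleMGF_le hY hK hKT.le _).trans ?_
        gcongr
        exact sum_Ico_inv_sq_le hK hKT.le
    _ = _ := by
        rw [mul_left_comm, ← exp_add, h_def]
        congr 2
        field_simp
        ring

end sampleMGF

theorem stmt_2_general (N K : ℕ) (hN : 0 < N) (hK : 0 < K)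
    (Y : Fin (N + K) → ℝ) (hY : ∀ j, Y j = 0 ∨ Y j = 1)
    (ν : ℝ) (hν0 : 0 < ν) :
    (((Finset.powersetCard K (Finset.univ : Finset (Fin (N + K)))).filter
          (fun S => (∑ j ∈ Finset.univ \ S, Y j) ≥
            ((N : ℝ) / K) * (∑ j ∈ S, Y j) + (N : ℝ) * ν)).card : ℝ) /
        ((Finset.powersetCard K (Finset.univ : Finset (Fin (N + K)))).card : ℝ) ≤
      Real.exp (-(2 * ν ^ 2 * N * K ^ 2) / (((N : ℝ) + K) * ((K : ℝ) + 1))) := by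
  have hN' : (0 : ℝ) < N := by exact_mod_cast hN
  have hK' : (0 : ℝ) < K := by exact_mod_cast hK
  have hY' : ∀ j, Y j ∈ Set.Icc 0 1 := fun j => by rcases hY j with h | h <;> simp [h]
  have htail := card_filter_sum_le_mean_sub_le hY' hK (by simpa using hN)
    (x := K * N * ν / (N + K)) (div_nonneg (mul_nonneg (by positivity) hν0.le) (by positivity))
  rw [Fintype.card_fin] at htail
  push_cast at htail
  rw [add_sub_cancel_right] at htail
  rw [card_powersetCard, card_univ, Fintype.card_fin,
    div_le_iff₀ (Nat.cast_pos.2 (Nat.choose_pos (by omega)))]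
  refine (Nat.cast_le.2 (card_le_card (monotone_filter_right _ fun S _ hS => ?_))).trans
    (htail.trans_eq ?_)
  · rw [sum_sdiff_eq_sub (subset_univ S), ge_iff_le, le_sub_iff_add_le] at hS
    field_simp at hS
    rw [← sub_div, le_div_iff₀ (by positivity)]
    linarith
  · rw [mul_comm]
    congr 2
    field_simp [hN'.ne']

theorem stmt_2 (N K : ℕ) (hN : 0 < N) (hK : 0 < K)
    (Y : Fin (N + K) → ℝ) (hY : ∀ j, Y j = 0 ∨ Y j = 1)
    (ν : ℝ) (hν0 : 0 < ν) (hν1 : ν < 1) :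
    (((Finset.powersetCard K (Finset.univ : Finset (Fin (N + K)))).filter
          (fun S => (∑ j ∈ Finset.univ \ S, Y j) ≥
            ((N : ℝ) / K) * (∑ j ∈ S, Y j) + (N : ℝ) * ν)).card : ℝ) /
        ((Finset.powersetCard K (Finset.univ : Finset (Fin (N + K)))).card : ℝ) ≤
      Real.exp (-(2 * ν ^ 2 * N * K ^ 2) / (((N : ℝ) + K) * ((K : ℝ) + 1))) :=
  stmt_2_general N K hN hK Y hY ν hν0
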